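/- For every k ≥ 1, the string b·TM_{2k+1}·complement(TM_{2k})' is lexicographically strictly smaller than b·TM_{2k+2}, where w' denotes w with its last letter removed. -/

import Mathlib

/-- Alphabet {a,b} with a = false, b = true, a < b. -/
abbrev Letter := Bool

/-- Lexicographic order (proper prefixes are smaller). -/
def lexlt (x y : List Bool) : Prop := List.Lex (· < ·) x y

/-- Fibonacci words: F 0 = b, F 1 = a, F (k+2) = F (k+1) ++ F k. -/
def Fib : ℕ → List Bool
  | 0 => [true]
  | 1 => [false]
  | (k+2) => Fib (k+1) ++ Fib k

/-- bitwise complement -/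
def comp (w : List Bool) : List Bool := w.map (fun c => !c)

/-- Thue-Morse words: TM 0 = a, TM (k+1) = TM k ++ comp (TM k). -/
def TM : ℕ → List Bool
  | 0 => [false]
  | (k+1) => TM k ++ comp (TM k)

/-- Fueled Nyldon predicate: a string of length 1 is Nyldon; a longer string is
Nyldon iff it admits no factorization into ≥ 2 Nyldon words in lexicographically
non-decreasing order. -/
def NyldonAux : ℕ → List Bool → Prop
  | 0, _ => False
  | (n+1), w =>
    w.length = 1 ∨ (1 < w.length ∧
      ¬ ∃ fs : List (List Bool), 2 ≤ fs.length ∧ fs.flatten = w ∧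
        fs.Chain' lexlt ∧ ∀ u ∈ fs, NyldonAux n u)

def Nyldon (w : List Bool) : Prop := NyldonAux w.length w

/-- H k = Fib k with its first letter removed. -/
def H (k : ℕ) : List Bool := (Fib k).tail

/-- s is the longest Nyldon proper suffix of w. -/
def IsLnps (w s : List Bool) : Prop :=
  s <:+ w ∧ s ≠ w ∧ Nyldon s ∧
    ∀ t : List Bool, t <:+ w → t ≠ w → Nyldon t → t.length ≤ s.length

/-- Thue-Morse morphism: τ(a)=ab, τ(b)=ba. -/
def tau (w : List Bool) : List Bool :=
  w.flatMap (fun c => if c then [true, false] else [false, true])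

/-- The sequence w_n: w_1=a, w_2=b, w_3=ba, w_4=baabbaa,
w_n = b·TM_{2n-8}·comp(TM_{2n-6})·comp(TM_{2n-6})' for n ≥ 5. -/
def wseq : ℕ → List Bool
  | 0 => []
  | 1 => [false]
  | 2 => [true]
  | 3 => [true, false]
  | 4 => [true, false, false, true, true, false, false]
  | (n+5) => true :: (TM (2*n+2) ++ comp (TM (2*n+4)) ++ (comp (TM (2*n+4))).dropLast)

/-- The twelve words t_i(k). -/
def tword : ℕ → ℕ → List Bool
  | 1, k => true :: (TM (2*k+1)).dropLast
  | 2, k => true :: TM (2*k+1)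
  | 3, k => true :: (TM (2*k+1) ++ (comp (TM (2*k))).dropLast)
  | 4, k => true :: TM (2*k)
  | 5, k => true :: (TM (2*k) ++ TM (2*k-1) ++ (comp (TM (2*k-2))).dropLast)
  | 6, k => true :: (TM (2*k) ++ (TM (2*k+1)).dropLast)
  | 7, k => true :: (TM (2*k) ++ TM (2*k+1))
  | 8, k => true :: (TM (2*k) ++ TM (2*k+1) ++ (comp (TM (2*k))).dropLast)
  | 9, k => true :: (TM (2*k) ++ (comp (TM (2*k+2))).dropLast)
  | 10, k => true :: (TM (2*k) ++ comp (TM (2*k+2)))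
  | 11, k => true :: (TM (2*k) ++ TM (2*k+1) ++ (comp (TM (2*k+2))).dropLast)
  | 12, k => true :: (TM (2*k) ++ comp (TM (2*k+2)) ++ (comp (TM (2*k+2))).dropLast)
  | _, _ => []

theorem List.Lex.of_isPrefix_of_length_lt {α : Type*} {r : α → α → Prop} {l₁ l₂ : List α}
    (h : l₁ <+: l₂) (hlt : l₁.length < l₂.length) : List.Lex r l₁ l₂ := by
  obtain ⟨_ | ⟨a, t⟩, rfl⟩ := h
  · simp at hlt
  · simpa using List.Lex.append_left r (List.Lex.nil : List.Lex r [] (a :: t)) l₁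

@[simp]
theorem comp_append (u v : List Bool) : comp (u ++ v) = comp u ++ comp v :=
  List.map_append ..

@[simp]
theorem comp_comp (w : List Bool) : comp (comp w) = w := by
  simp [comp, Function.comp_def]

@[simp]
theorem length_comp (w : List Bool) : (comp w).length = w.length :=
  List.length_map ..

theorem length_TM (n : ℕ) : (TM n).length = 2 ^ n := by
  induction n with
  | zero => rfl
  | succ n ih => simp [TM, ih, pow_succ, mul_two]

theorem TM_add_two (n : ℕ) : TM (n + 2) = TM (n + 1) ++ comp (TM n) ++ TM n := by
  simp [TM]

theorem stmt14 : ∀ k : ℕ, 1 ≤ k →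
    lexlt (true :: (TM (2*k+1) ++ (comp (TM (2*k))).dropLast))
      (true :: TM (2*k+2)) := by
  intro k _
  refine List.Lex.cons (List.Lex.of_isPrefix_of_length_lt ?_ ?_) <;> rw [TM_add_two]
  · exact ((List.prefix_append_right_inj _).2 (List.dropLast_prefix _)).trans
      (List.prefix_append _ _)
  · simp only [List.length_append, List.length_dropLast, length_comp, length_TM]
    have := Nat.one_le_two_pow (n := 2 * k)
    omega
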